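/- arXiv:math/0410591 — 6 statements merged into one kernel-verified Lean document; each statement's English description precedes it below -/
import Mathlib

section
/- Let D be a division ring, f, g, h ∈ D[t] with f(t) = g(t)h(t), and x ∈ D. Write a = h(x) for the left evaluation of h at x. If a = 0 then f(x) = 0. If a ≠ 0 then f(x) = g(a x a⁻¹)·h(x), where g(a x a⁻¹) denotes the left evaluation of g at the conjugate a x a⁻¹. -/
open Polynomial

private lemma aux_eval_mul {D : Type*} [DivisionRing D] (g h : D[X]) (x : D) :
    (g * h).eval x = g.sum fun n b => b * h.eval x * x ^ n := by
  induction g using Polynomial.induction_on' with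
  | add p q hp hq =>
    rw [add_mul, eval_add, hp, hq, sum_add_index] <;> simp [add_mul]
  | monomial n b =>
    rw [Polynomial.sum_monomial_index _ _ (by simp)]
    have : (monomial n b : D[X]) * h = C b * h * X ^ n := by
      rw [← C_mul_X_pow_eq_monomial, mul_assoc, mul_assoc, X_pow_mul]
    rw [this, eval_mul_X_pow, eval_C_mul, mul_assoc]

/-- Product formula for left evaluation over a division ring: if f = g·h and
a = h(x), then f(x) = 0 when a = 0, and f(x) = g(a x a⁻¹)·h(x) when a ≠ 0. -/
theorem stmt2 {D : Type*} [DivisionRing D] (f g h : D[X]) (hfgh : f = g * h)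
    (x : D) (a : D) (ha : a = h.eval x) :
    (a = 0 → f.eval x = 0) ∧
    (a ≠ 0 → f.eval x = g.eval (a * x * a⁻¹) * h.eval x) := by
  subst hfgh
  rw [aux_eval_mul, ← ha]
  constructor
  · intro h0; subst h0; simp [Polynomial.sum]
  · intro h0
    rw [eval_eq_sum, Polynomial.sum_def, Polynomial.sum_def, Finset.sum_mul]
    apply Finset.sum_congr rfl
    intro n hn
    clear hn
    have : (a * x * a⁻¹) ^ n = a * x ^ n * a⁻¹ := by
      induction n with
      | zero => simp [mul_inv_cancel₀ h0]
      | succ k ih =>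
        rw [pow_succ, ih, pow_succ]
        simp [mul_assoc, inv_mul_cancel_left₀ h0]
    rw [this]
    simp [mul_assoc, inv_mul_cancel₀ h0]
end

section
/- Let D be a division ring and x₁, x₂ ∈ D with x₁ ≠ x₂. Set y₁ = x₁ and y₂ = (x₂ − x₁)x₂(x₂ − x₁)⁻¹. Then (t − y₂)(t − y₁) = t² − (y₁ + y₂)t + y₂y₁ has both x₁ and x₂ as roots under left evaluation, i.e. x₁² − (y₁+y₂)x₁ + y₂y₁ = 0 and x₂² − (y₁+y₂)x₂ + y₂y₁ = 0. -/
/-- With y₁ = x₁ and y₂ = (x₂−x₁)x₂(x₂−x₁)⁻¹, the monic quadratic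
t² − (y₁+y₂)t + y₂y₁ has both x₁ and x₂ as roots under left evaluation. -/
theorem stmt4 {D : Type*} [DivisionRing D] (x₁ x₂ : D) (hne : x₁ ≠ x₂)
    (y₁ y₂ : D) (hy₁ : y₁ = x₁) (hy₂ : y₂ = (x₂ - x₁) * x₂ * (x₂ - x₁)⁻¹) :
    x₁ ^ 2 - (y₁ + y₂) * x₁ + y₂ * y₁ = 0 ∧
    x₂ ^ 2 - (y₁ + y₂) * x₂ + y₂ * y₁ = 0 := by
  have hd : x₂ - x₁ ≠ 0 := sub_ne_zero.mpr (Ne.symm hne)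
  have key : y₂ * (x₂ - x₁) = (x₂ - x₁) * x₂ := by
    rw [hy₂, mul_assoc, inv_mul_cancel₀ hd, mul_one]
  subst hy₁
  constructor
  · noncomm_ring
  · have : x₂ ^ 2 - (y₁ + y₂) * x₂ + y₂ * y₁
        = (x₂ - y₁) * x₂ - y₂ * (x₂ - y₁) := by noncomm_ring
    rw [this, key, sub_self]
end

section
/- Let D be a division ring and x₁, x₂ ∈ D with x₁ ≠ x₂. With y₂ = (x₂ − x₁)x₂(x₂ − x₁)⁻¹, y₁ = x₁, and y₂' = (x₁ − x₂)x₁(x₁ − x₂)⁻¹, y₁' = x₂, the symmetric functions agree: y₂ + y₁ = y₂' + y₁' and y₂·y₁ = y₂'·y₁'. -/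
/-- Noncommutative Vieta in degree 2: the elementary symmetric expressions in
the pseudo-roots are independent of the ordering of the roots. -/
theorem stmt5 {D : Type*} [DivisionRing D] (x₁ x₂ : D) (hne : x₁ ≠ x₂)
    (y₁ y₂ y₁' y₂' : D)
    (hy₁ : y₁ = x₁) (hy₂ : y₂ = (x₂ - x₁) * x₂ * (x₂ - x₁)⁻¹)
    (hy₁' : y₁' = x₂) (hy₂' : y₂' = (x₁ - x₂) * x₁ * (x₁ - x₂)⁻¹) :
    y₂ + y₁ = y₂' + y₁' ∧ y₂ * y₁ = y₂' * y₁' := by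
  rw [hy₁, hy₂, hy₁', hy₂']
  have hu : x₂ - x₁ ≠ 0 := sub_ne_zero.mpr hne.symm
  have h1 : (x₂ - x₁) * (x₂ - x₁)⁻¹ = 1 := mul_inv_cancel₀ hu
  have h2 : (x₂ - x₁)⁻¹ * (x₂ - x₁) = 1 := inv_mul_cancel₀ hu
  have hneg : (x₁ - x₂) * x₁ * (x₁ - x₂)⁻¹ = (x₂ - x₁) * x₁ * (x₂ - x₁)⁻¹ := by
    rw [show x₁ - x₂ = -(x₂ - x₁) by noncomm_ring, inv_neg]
    noncomm_ring
  rw [hneg]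
  constructor
  · rw [← sub_eq_zero]
    have : (x₂ - x₁) * x₂ * (x₂ - x₁)⁻¹ + x₁ - ((x₂ - x₁) * x₁ * (x₂ - x₁)⁻¹ + x₂)
        = (x₂ - x₁) * (x₂ - x₁) * (x₂ - x₁)⁻¹ - (x₂ - x₁) := by noncomm_ring
    rw [this, mul_assoc, h1, mul_one, sub_self]
  · rw [← sub_eq_zero]
    have : (x₂ - x₁) * x₂ * (x₂ - x₁)⁻¹ * x₁ - (x₂ - x₁) * x₁ * (x₂ - x₁)⁻¹ * x₂
        = (x₂ - x₁) * (x₂ * (x₂ - x₁)⁻¹ * x₁ - x₁ * (x₂ - x₁)⁻¹ * x₂) := by noncomm_ring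
    rw [this]
    have key : x₂ * (x₂ - x₁)⁻¹ * x₁ - x₁ * (x₂ - x₁)⁻¹ * x₂ = 0 := by
      have : x₂ * (x₂ - x₁)⁻¹ * x₁ - x₁ * (x₂ - x₁)⁻¹ * x₂
          = (x₂ - x₁) * (x₂ - x₁)⁻¹ * x₁ - x₁ * ((x₂ - x₁)⁻¹ * (x₂ - x₁)) := by noncomm_ring
      rw [this, h1, h2, one_mul, mul_one, sub_self]
    rw [key, mul_zero]
end

section
/- Let Q₂ be the ℚ-algebra with generators x_{∅,1}, x_{∅,2}, x_{{1},2}, x_{{2},1} and relations x_{{1},2} + x_{∅,1} = x_{{2},1} + x_{∅,2} and x_{{1},2}·x_{∅,1} = x_{{2},1}·x_{∅,2}. Then the subalgebra generated by x_{∅,1} and x_{{1},2} is free, i.e. x_{∅,1} and x_{{1},2} satisfy no nonzero polynomial relation over ℚ. -/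
/-- Generators: 0 ↦ x_{∅,1}, 1 ↦ x_{∅,2}, 2 ↦ x_{{1},2}, 3 ↦ x_{{2},1}. -/
inductive Q2Rel : FreeAlgebra ℚ (Fin 4) → FreeAlgebra ℚ (Fin 4) → Prop
  | add : Q2Rel (FreeAlgebra.ι ℚ (2 : Fin 4) + FreeAlgebra.ι ℚ (0 : Fin 4))
      (FreeAlgebra.ι ℚ (3 : Fin 4) + FreeAlgebra.ι ℚ (1 : Fin 4))
  | mul : Q2Rel (FreeAlgebra.ι ℚ (2 : Fin 4) * FreeAlgebra.ι ℚ (0 : Fin 4))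
      (FreeAlgebra.ι ℚ (3 : Fin 4) * FreeAlgebra.ι ℚ (1 : Fin 4))

abbrev Q2 := RingQuot Q2Rel

noncomputable def xg (i : Fin 4) : Q2 :=
  RingQuot.mkAlgHom ℚ Q2Rel (FreeAlgebra.ι ℚ i)

/-- The map ℚ⟨a,b⟩ → Q₂ sending a ↦ x_{∅,1}, b ↦ x_{{1},2}. -/
noncomputable def φ : FreeAlgebra ℚ (Fin 2) →ₐ[ℚ] Q2 :=
  FreeAlgebra.lift ℚ (fun i => if i = 0 then xg 0 else xg 2)

noncomputable def ψ : Q2 →ₐ[ℚ] FreeAlgebra ℚ (Fin 2) :=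
  RingQuot.liftAlgHom ℚ (s := Q2Rel)
    ⟨FreeAlgebra.lift ℚ (fun i => FreeAlgebra.ι ℚ (if (i : Fin 4).val < 2 then (0 : Fin 2) else 1)),
     by rintro x y h; cases h <;> simp <;> decide⟩

/-- The subalgebra of Q₂ generated by x_{∅,1} and x_{{1},2} is free. -/
theorem stmt6 : Function.Injective φ := by
  have h : AlgHom.comp ψ φ = AlgHom.id ℚ (FreeAlgebra ℚ (Fin 2)) := by
    apply FreeAlgebra.hom_ext
    funext i
    fin_cases i <;>
      simp [φ, ψ, xg, RingQuot.liftAlgHom_mkAlgHom_apply]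
  intro a b hab
  have ha := AlgHom.congr_fun h a
  have hb := AlgHom.congr_fun h b
  simp only [AlgHom.comp_apply, AlgHom.id_apply] at ha hb
  rw [← ha, ← hb, hab]
end

section
/- There is no ℚ-bialgebra structure (Δ̃, ε̃) on the free ℚ-algebra A = ℚ⟨y₁, y₂, y₃⟩, graded with each yᵣ in degree 1 and with Δ̃ and ε̃ being algebra maps respecting the grading in the sense that Δ̃(Aₙ) ⊆ ⊕_{i+j=n} Aᵢ ⊗ Aⱼ, such that Δ̃(eᵣ) = ∑_{i+j=r} eᵢ ⊗ eⱼ for r = 1, 2, 3, where e₀ = 1, e₁ = y₁+y₂+y₃, e₂ = y₃y₂ + y₃y₁ + y₂y₁, e₃ = y₃y₂y₁. -/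
/-!
A degree-one element has its coproduct in `A ⊗ 1 + 1 ⊗ A`. Pair `A ⊗ A` with `f ⊗ f`, where `f` is
the coefficient of the word `y₀` (so `f 1 = 0`): on a product of two elements of `A ⊗ 1 + 1 ⊗ A`
this pairing obeys a Leibniz rule whose factors `(f ⊗ ε)` and `(ε ⊗ f)` are fixed by the counit
axioms, so `(f ⊗ f)(Δ (a b)) = 2 f(a) f(b)` for `a, b` of degree one. Every monomial of `e₂`
contains `y₁` or `y₂`, hence `(f ⊗ f)(Δ e₂) = 0`, whereas the prescribed value
`e₂ ⊗ 1 + e₁ ⊗ e₁ + 1 ⊗ e₂` pairs to `f(e₁)² = 1`.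
-/

open TensorProduct

noncomputable section

abbrev A3 := FreeAlgebra ℚ (Fin 3)

def y (r : Fin 3) : A3 := FreeAlgebra.ι ℚ r

def A3one : Submodule ℚ A3 := Submodule.span ℚ (Set.range (FreeAlgebra.ι ℚ))

def deg (n : ℕ) : Submodule ℚ A3 := A3one ^ n

def P (i j : ℕ) : Submodule ℚ (A3 ⊗[ℚ] A3) :=
  LinearMap.range (TensorProduct.map (deg i).subtype (deg j).subtype)

def e1 : A3 := y 0 + y 1 + y 2
def e2 : A3 := y 2 * y 1 + y 2 * y 0 + y 1 * y 0
def e3 : A3 := y 2 * y 1 * y 0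

namespace FreeAlgebra

variable {R X : Type*} [CommSemiring R]

theorem basisFreeMonoid_of (x : X) : basisFreeMonoid R X (FreeMonoid.of x) = ι R x := by
  simp [basisFreeMonoid, MonoidAlgebra.coeffLinearEquiv, equivMonoidAlgebraFreeMonoid]

theorem basisFreeMonoid_one : basisFreeMonoid R X 1 = 1 := by
  simp [basisFreeMonoid, MonoidAlgebra.coeffLinearEquiv, equivMonoidAlgebraFreeMonoid]

end FreeAlgebra

section TensorPairing

variable {R A : Type*} [CommSemiring R] [Semiring A] [Algebra R A]

def tensorPairing (f g : A →ₗ[R] R) : A ⊗[R] A →ₗ[R] R :=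
  LinearMap.mul' R R ∘ₗ TensorProduct.map f g

@[simp]
theorem tensorPairing_tmul (f g : A →ₗ[R] R) (a b : A) :
    tensorPairing f g (a ⊗ₜ b) = f a * g b := by
  simp [tensorPairing]

theorem tensorPairing_counit_right (f : A →ₗ[R] R) (ε : A →ₐ[R] R) (t : A ⊗[R] A) :
    tensorPairing f ε.toLinearMap t =
      f (Algebra.TensorProduct.rid R R A (Algebra.TensorProduct.map (AlgHom.id R A) ε t)) := by
  induction t using TensorProduct.induction_on with
  | zero => simp
  | tmul a b => simp [mul_comm]
  | add u v hu hv => simp only [map_add, hu, hv]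

theorem tensorPairing_counit_left (f : A →ₗ[R] R) (ε : A →ₐ[R] R) (t : A ⊗[R] A) :
    tensorPairing ε.toLinearMap f t =
      f (Algebra.TensorProduct.lid R A (Algebra.TensorProduct.map ε (AlgHom.id R A) t)) := by
  induction t using TensorProduct.induction_on with
  | zero => simp
  | tmul a b => simp
  | add u v hu hv => simp only [map_add, hu, hv]

variable (R A) in
def tmulOneSupOneTmul : Submodule R (A ⊗[R] A) :=
  LinearMap.range ((TensorProduct.mk R A A).flip 1) ⊔ LinearMap.range (TensorProduct.mk R A A 1)

theorem mem_tmulOneSupOneTmul {t : A ⊗[R] A} :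
    t ∈ tmulOneSupOneTmul R A ↔ ∃ a b : A, a ⊗ₜ 1 + 1 ⊗ₜ b = t := by
  simp [tmulOneSupOneTmul, Submodule.mem_sup]

theorem tensorPairing_mul {f ε : A →ₗ[R] R} (hf : f 1 = 0) (hε : ε 1 = 1) {u v : A ⊗[R] A}
    (hu : u ∈ tmulOneSupOneTmul R A) (hv : v ∈ tmulOneSupOneTmul R A) :
    tensorPairing f f (u * v) =
      tensorPairing f ε u * tensorPairing ε f v + tensorPairing ε f u * tensorPairing f ε v := by
  obtain ⟨a, b, rfl⟩ := mem_tmulOneSupOneTmul.mp hu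
  obtain ⟨c, d, rfl⟩ := mem_tmulOneSupOneTmul.mp hv
  simp [add_mul, mul_add, Algebra.TensorProduct.tmul_mul_tmul, hf, hε]
  ring

theorem tensorPairing_comul_mul {Δ : A →ₐ[R] A ⊗[R] A} {ε : A →ₐ[R] R}
    (hlid : ∀ a : A, Algebra.TensorProduct.lid R A
      (Algebra.TensorProduct.map ε (AlgHom.id R A) (Δ a)) = a)
    (hrid : ∀ a : A, Algebra.TensorProduct.rid R R A
      (Algebra.TensorProduct.map (AlgHom.id R A) ε (Δ a)) = a)
    {f : A →ₗ[R] R} (hf : f 1 = 0) {a b : A}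
    (ha : Δ a ∈ tmulOneSupOneTmul R A) (hb : Δ b ∈ tmulOneSupOneTmul R A) :
    tensorPairing f f (Δ (a * b)) = 2 * (f a * f b) := by
  rw [map_mul, tensorPairing_mul (ε := ε.toLinearMap) hf (map_one ε) ha hb,
    tensorPairing_counit_right, tensorPairing_counit_left, tensorPairing_counit_right,
    tensorPairing_counit_left, hlid, hrid, hlid, hrid]
  ring

end TensorPairing

theorem y_mem_deg_one (i : Fin 3) : y i ∈ deg 1 := by
  rw [deg, pow_one]
  exact Submodule.subset_span ⟨i, rfl⟩

theorem P_zero_right_le (i : ℕ) : P i 0 ≤ tmulOneSupOneTmul ℚ A3 := by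
  rw [P, TensorProduct.range_map_eq_span_tmul, Submodule.span_le]
  rintro _ ⟨m, ⟨n, hn⟩, rfl⟩
  obtain ⟨c, rfl⟩ := Submodule.mem_one.mp (by simpa [deg] using hn)
  exact mem_tmulOneSupOneTmul.mpr
    ⟨c • (m : A3), 0, by simp [Algebra.algebraMap_eq_smul_one, TensorProduct.smul_tmul']⟩

theorem P_zero_left_le (j : ℕ) : P 0 j ≤ tmulOneSupOneTmul ℚ A3 := by
  rw [P, TensorProduct.range_map_eq_span_tmul, Submodule.span_le]
  rintro _ ⟨⟨m, hm⟩, n, rfl⟩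
  obtain ⟨c, rfl⟩ := Submodule.mem_one.mp (by simpa [deg] using hm)
  exact mem_tmulOneSupOneTmul.mpr
    ⟨0, c • (n : A3), by simp [Algebra.algebraMap_eq_smul_one, TensorProduct.smul_tmul]⟩

theorem iSup_P_add_eq_one_le :
    ⨆ (p : ℕ × ℕ) (_ : p.1 + p.2 = 1), P p.1 p.2 ≤ tmulOneSupOneTmul ℚ A3 := by
  refine iSup₂_le fun ⟨i, j⟩ hij => ?_
  obtain ⟨rfl, rfl⟩ | ⟨rfl, rfl⟩ : (i = 0 ∧ j = 1) ∨ (i = 1 ∧ j = 0) := by omega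
  exacts [P_zero_left_le 1, P_zero_right_le 1]

def coeffY0 : A3 →ₗ[ℚ] ℚ := (FreeAlgebra.basisFreeMonoid ℚ (Fin 3)).coord (FreeMonoid.of 0)

theorem coeffY0_one : coeffY0 1 = 0 := by
  simp [coeffY0, ← FreeAlgebra.basisFreeMonoid_one]

theorem coeffY0_y (r : Fin 3) : coeffY0 (y r) = if r = 0 then 1 else 0 := by
  classical
  rw [coeffY0, Module.Basis.coord_apply, y, ← FreeAlgebra.basisFreeMonoid_of,
    Module.Basis.repr_self, Finsupp.single_apply, FreeMonoid.of_injective.eq_iff]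
  congr

/-- There is no graded ℚ-bialgebra structure on ℚ⟨y₁,y₂,y₃⟩ (each yᵣ of degree 1)
with Δ(eᵣ) = ∑_{i+j=r} eᵢ ⊗ eⱼ for r = 1, 2, 3. -/
theorem stmt11 :
    ¬ ∃ (Δ : A3 →ₐ[ℚ] A3 ⊗[ℚ] A3) (ε : A3 →ₐ[ℚ] ℚ),
      (∀ n : ℕ, ∀ a ∈ deg n, Δ a ∈ ⨆ (p : ℕ × ℕ) (_ : p.1 + p.2 = n), P p.1 p.2) ∧
      (∀ a : A3, (Algebra.TensorProduct.assoc ℚ ℚ ℚ A3 A3 A3)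
          ((Algebra.TensorProduct.map Δ (AlgHom.id ℚ A3)) (Δ a)) =
        (Algebra.TensorProduct.map (AlgHom.id ℚ A3) Δ) (Δ a)) ∧
      (∀ a : A3, (Algebra.TensorProduct.lid ℚ A3)
          ((Algebra.TensorProduct.map ε (AlgHom.id ℚ A3)) (Δ a)) = a) ∧
      (∀ a : A3, (Algebra.TensorProduct.rid ℚ ℚ A3)
          ((Algebra.TensorProduct.map (AlgHom.id ℚ A3) ε) (Δ a)) = a) ∧
      Δ e1 = e1 ⊗ₜ[ℚ] 1 + 1 ⊗ₜ[ℚ] e1 ∧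
      Δ e2 = e2 ⊗ₜ[ℚ] 1 + e1 ⊗ₜ[ℚ] e1 + 1 ⊗ₜ[ℚ] e2 ∧
      Δ e3 = e3 ⊗ₜ[ℚ] 1 + e2 ⊗ₜ[ℚ] e1 + e1 ⊗ₜ[ℚ] e2 + 1 ⊗ₜ[ℚ] e3 := by
  rintro ⟨Δ, ε, hgrad, -, hlid, hrid, -, he2, -⟩
  have hy (i : Fin 3) : Δ (y i) ∈ tmulOneSupOneTmul ℚ A3 :=
    iSup_P_add_eq_one_le (hgrad 1 (y i) (y_mem_deg_one i))
  have hmul (i j : Fin 3) := tensorPairing_comul_mul hlid hrid coeffY0_one (hy i) (hy j)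
  have h0 : tensorPairing coeffY0 coeffY0 (Δ e2) = 0 := by
    simp only [e2, map_add, hmul, coeffY0_y]
    norm_num [Fin.ext_iff]
  have h1 : tensorPairing coeffY0 coeffY0 (Δ e2) = 1 := by
    simp [he2, e1, coeffY0_y, coeffY0_one]
  exact zero_ne_one (h0.symm.trans h1)

end
end

section
/- Let D be a division ring and x₁, x₂ ∈ D with x₁ ≠ x₂. Then t² − (y₁ + y₂)t + y₂y₁ (with y₁ = x₁, y₂ = (x₂−x₁)x₂(x₂−x₁)⁻¹) is the unique monic polynomial of degree 2 over D having both x₁ and x₂ as roots under left evaluation. -/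
open Polynomial

/-- t² − (y₁+y₂)t + y₂y₁ is the unique monic degree-2 polynomial over a
division ring having both of the distinct elements x₁, x₂ as roots under
left evaluation. -/
theorem stmt16 {D : Type*} [DivisionRing D] (x₁ x₂ : D) (hne : x₁ ≠ x₂)
    (y₁ y₂ : D) (hy₁ : y₁ = x₁) (hy₂ : y₂ = (x₂ - x₁) * x₂ * (x₂ - x₁)⁻¹) :
    ((X ^ 2 - C (y₁ + y₂) * X + C (y₂ * y₁) : D[X]).eval x₁ = 0 ∧
     (X ^ 2 - C (y₁ + y₂) * X + C (y₂ * y₁) : D[X]).eval x₂ = 0) ∧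
    (∀ f : D[X], f.Monic → f.natDegree = 2 → f.eval x₁ = 0 → f.eval x₂ = 0 →
      f = X ^ 2 - C (y₁ + y₂) * X + C (y₂ * y₁)) := by
  subst hy₁
  have hsub : x₂ - y₁ ≠ 0 := sub_ne_zero.mpr hne.symm
  have key : y₂ * (x₂ - y₁) = (x₂ - y₁) * x₂ := by
    rw [hy₂, mul_assoc, inv_mul_cancel₀ hsub, mul_one]
  -- scalar root equations
  have r1 : y₁ ^ 2 - (y₁ + y₂) * y₁ + y₂ * y₁ = 0 := by noncomm_ring
  have r2 : x₂ ^ 2 - (y₁ + y₂) * x₂ + y₂ * y₁ = 0 := by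
    have h : x₂ ^ 2 - (y₁ + y₂) * x₂ + y₂ * y₁
        = (x₂ - y₁) * x₂ - y₂ * (x₂ - y₁) := by noncomm_ring
    rw [h, ← key, sub_self]
  have e1 : (X ^ 2 - C (y₁ + y₂) * X + C (y₂ * y₁) : D[X]).eval y₁ = 0 := by
    simpa [X_pow_eq_monomial, eval_monomial] using r1
  have e2 : (X ^ 2 - C (y₁ + y₂) * X + C (y₂ * y₁) : D[X]).eval x₂ = 0 := by
    simpa [X_pow_eq_monomial, eval_monomial] using r2
  refine ⟨⟨e1, e2⟩, ?_⟩
  intro f hm hd h1 h2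
  set b := f.coeff 1 with hb
  set c := f.coeff 0 with hc
  have hc2 : f.coeff 2 = 1 := by
    have := hm.coeff_natDegree
    rwa [hd] at this
  have hf : f = X ^ 2 + C b * X + C c := by
    ext n
    match n with
    | 0 => simp [hc]
    | 1 => simp [hb]
    | 2 => simp [hc2, coeff_X_pow]
    | (n + 3) =>
      have hlt : f.natDegree < n + 3 := by omega
      simp [coeff_eq_zero_of_natDegree_lt hlt, coeff_X_pow, coeff_C,
        Nat.succ_ne_zero]
  have s1 : y₁ ^ 2 + b * y₁ + c = 0 := by
    have := h1; rw [hf] at this; simpa [X_pow_eq_monomial, eval_monomial] using this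
  have s2 : x₂ ^ 2 + b * x₂ + c = 0 := by
    have := h2; rw [hf] at this; simpa [X_pow_eq_monomial, eval_monomial] using this
  have d1 : (b + (y₁ + y₂)) * y₁ + (c - y₂ * y₁) = 0 := by
    have h : (b + (y₁ + y₂)) * y₁ + (c - y₂ * y₁)
        = (y₁ ^ 2 + b * y₁ + c) - (y₁ ^ 2 - (y₁ + y₂) * y₁ + y₂ * y₁) := by
      noncomm_ring
    rw [h, s1, r1, sub_zero]
  have d2 : (b + (y₁ + y₂)) * x₂ + (c - y₂ * y₁) = 0 := by
    have h : (b + (y₁ + y₂)) * x₂ + (c - y₂ * y₁)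
        = (x₂ ^ 2 + b * x₂ + c) - (x₂ ^ 2 - (y₁ + y₂) * x₂ + y₂ * y₁) := by
      noncomm_ring
    rw [h, s2, r2, sub_zero]
  have hp : b + (y₁ + y₂) = 0 := by
    have h : (b + (y₁ + y₂)) * (y₁ - x₂) = 0 := by
      have := congrArg₂ (· - ·) d1 d2
      simpa [mul_sub, sub_sub_sub_cancel_right] using this
    rcases mul_eq_zero.mp h with h' | h'
    · exact h'
    · exact absurd (sub_eq_zero.mp h') hne
  have hbval : b = -(y₁ + y₂) := eq_neg_of_add_eq_zero_left hp
  have hcval : c = y₂ * y₁ := by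
    rw [hp, zero_mul, zero_add] at d1
    exact sub_eq_zero.mp d1
  rw [hf, hbval, hcval, map_neg]
  noncomm_ring
end
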